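/- arXiv:1611.01494 — 4 statements merged into one kernel-verified Lean document; each statement's English description precedes it below -/
import Mathlib

section
/- Let E be a locally solid vector lattice. If (T_α) and (S_α) are nets of linear operators on E (over the same directed index set) both converging to 0 order-uniformly on a neighborhood U of 0, then the net of compositions (T_α ∘ S_α) converges to 0 order-uniformly on U; that is, for every a ∈ E with 0 ≤ a there is an index α₀ such that |T_α (S_α x)| ≤ a for all x ∈ U and all α ≥ α₀. -/
open Filter Topology

/-! Since `U` contains a solid neighbourhood `W` of `0`, and `W` contains a positive multiple
`c • a` of any `a ≥ 0`, the bound `|S α x| ≤ c • a` eventually forces `S α x ∈ W ⊆ U` for all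
`x ∈ U`; from then on `|T α (S α x)| ≤ a` as soon as `T α` is `a`-small on `U`. -/

theorem exists_pos_smul_mem_of_mem_nhds_zero {E : Type*} [AddCommGroup E] [Module ℝ E]
    [TopologicalSpace E] [ContinuousSMul ℝ E] {W : Set E} (hW : W ∈ 𝓝 (0 : E)) (a : E) :
    ∃ c : ℝ, 0 < c ∧ c • a ∈ W := by
  have hlim : Tendsto (fun c : ℝ => c • a) (𝓝[>] 0) (𝓝 0) := by
    simpa using ((tendsto_id (x := 𝓝 (0 : ℝ))).smul_const a).mono_left nhdsWithin_le_nhds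
  obtain ⟨c, hcW, hc⟩ := ((hlim.eventually_mem hW).and self_mem_nhdsWithin).exists
  exact ⟨c, hc, hcW⟩

theorem exists_pos_forall_abs_le_smul_mem_of_solid {E : Type*} [AddCommGroup E] [Lattice E]
    [Module ℝ E] [TopologicalSpace E] [ContinuousSMul ℝ E]
    {W : Set E} (hW : W ∈ 𝓝 (0 : E)) (hW_solid : ∀ x y : E, y ∈ W → |x| ≤ |y| → x ∈ W)
    (a : E) : ∃ c : ℝ, 0 < c ∧ ∀ x : E, |x| ≤ c • a → x ∈ W := by
  obtain ⟨c, hc, hcW⟩ := exists_pos_smul_mem_of_mem_nhds_zero hW a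
  exact ⟨c, hc, fun x hx => hW_solid x _ hcW (hx.trans (le_abs_self _))⟩

theorem comp_orderUnifConv_general
    {E : Type*} [AddCommGroup E] [Lattice E] [Module ℝ E]
    [PosSMulMono ℝ E]
    [TopologicalSpace E] [ContinuousSMul ℝ E]
    (hsolid : ∀ W ∈ 𝓝 (0 : E), ∃ W' ∈ 𝓝 (0 : E), W' ⊆ W ∧
      ∀ x y : E, y ∈ W' → |x| ≤ |y| → x ∈ W')
    {ι : Type*} [SemilatticeSup ι]
    (T S : ι → E →ₗ[ℝ] E) (U : Set E) (hU : U ∈ 𝓝 (0 : E))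
    (hT : ∀ a : E, 0 ≤ a → ∃ α₀ : ι, ∀ α ≥ α₀, ∀ x ∈ U, |T α x| ≤ a)
    (hS : ∀ a : E, 0 ≤ a → ∃ α₀ : ι, ∀ α ≥ α₀, ∀ x ∈ U, |S α x| ≤ a) :
    ∀ a : E, 0 ≤ a → ∃ α₀ : ι, ∀ α ≥ α₀, ∀ x ∈ U, |T α (S α x)| ≤ a := by
  intro a ha
  obtain ⟨W, hW, hWU, hW_solid⟩ := hsolid U hU
  obtain ⟨c, hc, hcW⟩ := exists_pos_forall_abs_le_smul_mem_of_solid hW hW_solid a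
  obtain ⟨α₁, hα₁⟩ := hS (c • a) (smul_nonneg hc.le ha)
  obtain ⟨α₂, hα₂⟩ := hT a ha
  refine ⟨α₁ ⊔ α₂, fun α hα x hx => hα₂ α (le_sup_right.trans hα) _ ?_⟩
  exact hWU (hcW _ (hα₁ α (le_sup_left.trans hα) x hx))

/-- In a locally solid vector lattice `E`, if the nets `(T α)` and `(S α)` of linear
operators both converge to `0` order-uniformly on a neighborhood `U` of `0`, then the net of
compositions `(T α ∘ S α)` converges to `0` order-uniformly on `U`. -/
theorem comp_orderUnifConv
    {E : Type*} [AddCommGroup E] [Lattice E] [Module ℝ E]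
    [CovariantClass E E (· + ·) (· ≤ ·)] [PosSMulMono ℝ E]
    [TopologicalSpace E] [IsTopologicalAddGroup E] [ContinuousSMul ℝ E]
    (hsolid : ∀ W ∈ 𝓝 (0 : E), ∃ W' ∈ 𝓝 (0 : E), W' ⊆ W ∧
      ∀ x y : E, y ∈ W' → |x| ≤ |y| → x ∈ W')
    {ι : Type*} [Nonempty ι] [SemilatticeSup ι]
    (T S : ι → E →ₗ[ℝ] E) (U : Set E) (hU : U ∈ 𝓝 (0 : E))
    (hT : ∀ a : E, 0 ≤ a → ∃ α₀ : ι, ∀ α ≥ α₀, ∀ x ∈ U, |T α x| ≤ a)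
    (hS : ∀ a : E, 0 ≤ a → ∃ α₀ : ι, ∀ α ≥ α₀, ∀ x ∈ U, |S α x| ≤ a) :
    ∀ a : E, 0 ≤ a → ∃ α₀ : ι, ∀ α ≥ α₀, ∀ x ∈ U, |T α (S α x)| ≤ a :=
  comp_orderUnifConv_general hsolid T S U hU hT hS
end

section
/- Let E be a locally solid vector lattice. If (T_α) and (S_α) are nets of linear operators on E (over the same directed index set) each converging to 0 order-uniformly on every topologically bounded subset of E, then the net of compositions (T_α ∘ S_α) converges to 0 order-uniformly on every topologically bounded subset of E. -/
/-!
Order intervals `{y | |y| ≤ a}` are topologically bounded in a locally solid vector lattice: a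
solid neighbourhood `W` of `0` contains some `δ • a` with `δ > 0`, hence the whole interval
`δ • {y | |y| ≤ a}`. So `S α` eventually maps a bounded set `B` into `{y | |y| ≤ a}`, on which
`T α` is eventually bounded by `a`.
-/

open Filter Topology Pointwise

def IsTopBounded {E : Type*} [SMul ℝ E] [TopologicalSpace E] [Zero E] (B : Set E) : Prop :=
  ∀ V ∈ nhds (0 : E), ∃ γ : ℝ, 0 < γ ∧ B ⊆ γ • V

def IsLocallySolid (E : Type*) [Lattice E] [AddGroup E] [TopologicalSpace E] : Prop :=
  ∀ W ∈ 𝓝 (0 : E), ∃ W' ∈ 𝓝 (0 : E), W' ⊆ W ∧ ∀ x y : E, y ∈ W' → |x| ≤ |y| → x ∈ W'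

section

variable {E : Type*} [AddCommGroup E] [Module ℝ E]

theorem exists_pos_smul_mem_of_mem_nhds_zero_s5 [TopologicalSpace E] [ContinuousSMul ℝ E]
    {V : Set E} (hV : V ∈ 𝓝 (0 : E)) (a : E) : ∃ δ : ℝ, 0 < δ ∧ δ • a ∈ V := by
  have hsmul : Tendsto (fun t : ℝ => t • a) (𝓝 0) (𝓝 ((0 : ℝ) • a)) :=
    (continuous_id.smul continuous_const).tendsto 0
  rw [zero_smul] at hsmul
  exact ((eventually_mem_nhdsWithin (s := Set.Ioi 0)).and
    (hsmul.mono_left nhdsWithin_le_nhds hV)).exists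

theorem abs_smul_le_smul_of_abs_le [Lattice E] [PosSMulMono ℝ E] {x a : E} {δ : ℝ}
    (hδ : 0 ≤ δ) (hx : |x| ≤ a) : |δ • x| ≤ δ • a := by
  obtain ⟨hxa, hnxa⟩ := abs_le'.mp hx
  refine abs_le'.mpr ⟨smul_le_smul_of_nonneg_left hxa hδ, ?_⟩
  rw [← smul_neg]
  exact smul_le_smul_of_nonneg_left hnxa hδ

theorem IsLocallySolid.isTopBounded_abs_le [Lattice E] [PosSMulMono ℝ E] [TopologicalSpace E]
    [ContinuousSMul ℝ E] (hE : IsLocallySolid E) (a : E) : IsTopBounded {y : E | |y| ≤ a} := by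
  intro V hV
  obtain ⟨W, hW, hWV, hWsolid⟩ := hE V hV
  obtain ⟨δ, hδ, hδa⟩ := exists_pos_smul_mem_of_mem_nhds_zero_s5 hW a
  refine ⟨δ⁻¹, inv_pos.mpr hδ, fun x hx => ?_⟩
  have hδx : δ • x ∈ W :=
    hWsolid _ _ hδa ((abs_smul_le_smul_of_abs_le hδ.le hx).trans (le_abs_self _))
  rw [← inv_smul_smul₀ hδ.ne' x]
  exact Set.smul_mem_smul_set (hWV hδx)

end

theorem comp_orderUnifConv_on_bounded_general
    {E : Type*} [AddCommGroup E] [Lattice E] [Module ℝ E]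
    [PosSMulMono ℝ E]
    [TopologicalSpace E] [ContinuousSMul ℝ E]
    (hsolid : ∀ W ∈ 𝓝 (0 : E), ∃ W' ∈ 𝓝 (0 : E), W' ⊆ W ∧
      ∀ x y : E, y ∈ W' → |x| ≤ |y| → x ∈ W')
    {ι : Type*} [SemilatticeSup ι]
    (T S : ι → E →ₗ[ℝ] E)
    (hT : ∀ B : Set E, IsTopBounded B →
      ∀ a : E, 0 ≤ a → ∃ α₀ : ι, ∀ α ≥ α₀, ∀ x ∈ B, |T α x| ≤ a)
    (hS : ∀ B : Set E, IsTopBounded B →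
      ∀ a : E, 0 ≤ a → ∃ α₀ : ι, ∀ α ≥ α₀, ∀ x ∈ B, |S α x| ≤ a) :
    ∀ B : Set E, IsTopBounded B →
      ∀ a : E, 0 ≤ a → ∃ α₀ : ι, ∀ α ≥ α₀, ∀ x ∈ B, |T α (S α x)| ≤ a := by
  intro B hB a ha
  obtain ⟨αT, hαT⟩ := hT _ (IsLocallySolid.isTopBounded_abs_le hsolid a) a ha
  obtain ⟨αS, hαS⟩ := hS B hB a ha
  exact ⟨αT ⊔ αS, fun α hα x hx =>
    hαT α (le_sup_left.trans hα) _ (hαS α (le_sup_right.trans hα) x hx)⟩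

/-- In a locally solid vector lattice `E`, if the nets `(T α)` and `(S α)` of
linear operators each converge to `0` order-uniformly on every topologically bounded subset of
`E`, then the net of compositions `(T α ∘ S α)` converges to `0` order-uniformly on every
topologically bounded subset of `E`. -/
theorem comp_orderUnifConv_on_bounded
    {E : Type*} [AddCommGroup E] [Lattice E] [Module ℝ E]
    [CovariantClass E E (· + ·) (· ≤ ·)] [PosSMulMono ℝ E]
    [TopologicalSpace E] [IsTopologicalAddGroup E] [ContinuousSMul ℝ E]
    (hsolid : ∀ W ∈ 𝓝 (0 : E), ∃ W' ∈ 𝓝 (0 : E), W' ⊆ W ∧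
      ∀ x y : E, y ∈ W' → |x| ≤ |y| → x ∈ W')
    {ι : Type*} [Nonempty ι] [SemilatticeSup ι]
    (T S : ι → E →ₗ[ℝ] E)
    (hT : ∀ B : Set E, IsTopBounded B →
      ∀ a : E, 0 ≤ a → ∃ α₀ : ι, ∀ α ≥ α₀, ∀ x ∈ B, |T α x| ≤ a)
    (hS : ∀ B : Set E, IsTopBounded B →
      ∀ a : E, 0 ≤ a → ∃ α₀ : ι, ∀ α ≥ α₀, ∀ x ∈ B, |S α x| ≤ a) :
    ∀ B : Set E, IsTopBounded B →
      ∀ a : E, 0 ≤ a → ∃ α₀ : ι, ∀ α ≥ α₀, ∀ x ∈ B, |T α (S α x)| ≤ a :=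
  comp_orderUnifConv_on_bounded_general hsolid T S hT hS
end

section
/- Let E be a Dedekind complete (conditionally complete) locally solid vector lattice, let U be a solid neighborhood of 0 in E, and let (T_α), (S_α) be nets of linear operators on E (over the same directed index set) converging order-uniformly on U to linear operators T and S respectively. Assume that each T_α, each S_α, T and S map U into an order bounded set. For a linear operator R, S' and 0 ≤ x set F(R,S')(x) := sup { R u + S' v : 0 ≤ u, 0 ≤ v, u + v = x }. Then for every a ∈ E with 0 ≤ a there is an index α₀ such that for all α ≥ α₀ and all x ∈ U with 0 ≤ x one has |F(T_α,S_α)(x) − F(T,S)(x)| ≤ a; i.e., the Riesz–Kantorovich suprema F(T_α,S_α) converge to F(T,S) order-uniformly on U ∩ E₊. -/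
open Filter Topology Pointwise

/-- The Riesz–Kantorovich expression: `F(R,S)(x) = sup {R u + S v : 0 ≤ u, 0 ≤ v, u + v = x}`. -/
noncomputable def RKsup {E : Type*} [ConditionallyCompleteLattice E] [AddCommGroup E]
    [Module ℝ E] (R S : E →ₗ[ℝ] E) (x : E) : E :=
  sSup {z : E | ∃ u v : E, 0 ≤ u ∧ 0 ≤ v ∧ u + v = x ∧ z = R u + S v}

/-!
Every decomposition `x = u + v` with `u, v ≥ 0` has both parts in `[0, x]`, and `[0, x] ⊆ U`
because `U` is solid. So on the sets whose suprema define `F(T_α, S_α)(x)` and `F(T, S)(x)`, each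
term `T_α u + S_α v` is within `a/2 + a/2` of the term `T u + S v` and vice versa; passing to
suprema, which exist by the order boundedness assumptions, gives `|F(T_α,S_α)(x) - F(T,S)(x)| ≤ a`
uniformly in `x`.
-/

open Set LatticeOrderedAddCommGroup

section LatticeOrderedGroup

variable {α : Type*} [Lattice α] [AddCommGroup α] [AddLeftMono α] {u v x c : α}

theorem le_add_of_abs_sub_le (h : |u - v| ≤ c) : u ≤ v + c :=
  sub_le_iff_le_add'.mp ((le_abs_self _).trans h)

theorem mem_Icc_of_add_eq (hu : 0 ≤ u) (hv : 0 ≤ v) (huv : u + v = x) : u ∈ Icc 0 x :=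
  ⟨hu, huv ▸ le_add_of_nonneg_right hv⟩

theorem IsSolid.Icc_zero_subset {U : Set α} (hU : IsSolid U) (hxU : x ∈ U) (hx : 0 ≤ x) :
    Icc 0 x ⊆ U := fun u hu =>
  hU hxU (by rw [abs_of_nonneg hu.1, abs_of_nonneg hx]; exact hu.2)

end LatticeOrderedGroup

section RieszKantorovich

variable {E : Type*} [ConditionallyCompleteLattice E] [AddCommGroup E] [Module ℝ E]
  {R Q R₁ Q₁ R₂ Q₂ : E →ₗ[ℝ] E} {u v x b c : E}

theorem RKsup_le (hx : 0 ≤ x)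
    (h : ∀ u v : E, 0 ≤ u → 0 ≤ v → u + v = x → R u + Q v ≤ c) : RKsup R Q x ≤ c := by
  refine csSup_le ⟨R 0 + Q x, 0, x, le_rfl, hx, zero_add x, rfl⟩ ?_
  rintro _ ⟨u, v, hu, hv, huv, rfl⟩
  exact h u v hu hv huv

variable [AddLeftMono E]

theorem le_RKsup (hR : BddAbove (R '' Icc 0 x)) (hQ : BddAbove (Q '' Icc 0 x))
    (hu : 0 ≤ u) (hv : 0 ≤ v) (huv : u + v = x) : R u + Q v ≤ RKsup R Q x := by
  obtain ⟨bR, hbR⟩ := hR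
  obtain ⟨bQ, hbQ⟩ := hQ
  have hbdd : BddAbove {z : E | ∃ u v : E, 0 ≤ u ∧ 0 ≤ v ∧ u + v = x ∧ z = R u + Q v} := by
    refine ⟨bR + bQ, ?_⟩
    rintro _ ⟨u', v', hu', hv', huv', rfl⟩
    exact add_le_add (hbR ⟨u', mem_Icc_of_add_eq hu' hv' huv', rfl⟩)
      (hbQ ⟨v', mem_Icc_of_add_eq hv' hu' ((add_comm v' u').trans huv'), rfl⟩)
  exact le_csSup hbdd ⟨u, v, hu, hv, huv, rfl⟩

theorem RKsup_le_RKsup_add (hx : 0 ≤ x)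
    (hR₂ : BddAbove (R₂ '' Icc 0 x)) (hQ₂ : BddAbove (Q₂ '' Icc 0 x))
    (hR : ∀ u ∈ Icc 0 x, R₁ u ≤ R₂ u + b) (hQ : ∀ v ∈ Icc 0 x, Q₁ v ≤ Q₂ v + c) :
    RKsup R₁ Q₁ x ≤ RKsup R₂ Q₂ x + (b + c) := by
  refine RKsup_le hx fun u v hu hv huv => ?_
  calc R₁ u + Q₁ v
      ≤ (R₂ u + b) + (Q₂ v + c) :=
        add_le_add (hR u (mem_Icc_of_add_eq hu hv huv))
          (hQ v (mem_Icc_of_add_eq hv hu ((add_comm v u).trans huv)))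
    _ = (R₂ u + Q₂ v) + (b + c) := add_add_add_comm _ _ _ _
    _ ≤ RKsup R₂ Q₂ x + (b + c) := by grw [le_RKsup hR₂ hQ₂ hu hv huv]

theorem abs_RKsup_sub_RKsup_le (hx : 0 ≤ x)
    (hR₁ : BddAbove (R₁ '' Icc 0 x)) (hQ₁ : BddAbove (Q₁ '' Icc 0 x))
    (hR₂ : BddAbove (R₂ '' Icc 0 x)) (hQ₂ : BddAbove (Q₂ '' Icc 0 x))
    (hR : ∀ u ∈ Icc 0 x, |R₁ u - R₂ u| ≤ b) (hQ : ∀ v ∈ Icc 0 x, |Q₁ v - Q₂ v| ≤ c) :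
    |RKsup R₁ Q₁ x - RKsup R₂ Q₂ x| ≤ b + c := by
  have h₁₂ := RKsup_le_RKsup_add hx hR₂ hQ₂
    (fun u hu => le_add_of_abs_sub_le (hR u hu)) (fun v hv => le_add_of_abs_sub_le (hQ v hv))
  have h₂₁ := RKsup_le_RKsup_add hx hR₁ hQ₁
    (fun u hu => le_add_of_abs_sub_le ((abs_sub_comm _ _).trans_le (hR u hu)))
    (fun v hv => le_add_of_abs_sub_le ((abs_sub_comm _ _).trans_le (hQ v hv)))
  refine abs_le'.mpr ⟨sub_le_iff_le_add'.mpr h₁₂, ?_⟩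
  rw [neg_sub]
  exact sub_le_iff_le_add'.mpr h₂₁

end RieszKantorovich

theorem rksup_orderUnifConv_general
    {E : Type*} [ConditionallyCompleteLattice E] [AddCommGroup E] [Module ℝ E]
    [CovariantClass E E (· + ·) (· ≤ ·)] [PosSMulMono ℝ E]
    {ι : Type*} [SemilatticeSup ι]
    (U : Set E)
    (hUsolid : ∀ x y : E, y ∈ U → |x| ≤ |y| → x ∈ U)
    (T S : ι → E →ₗ[ℝ] E) (T₀ S₀ : E →ₗ[ℝ] E)
    (hTob : ∀ α : ι, ∃ a : E, 0 ≤ a ∧ (T α) '' U ⊆ Set.Icc (-a) a)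
    (hSob : ∀ α : ι, ∃ a : E, 0 ≤ a ∧ (S α) '' U ⊆ Set.Icc (-a) a)
    (hT₀ob : ∃ a : E, 0 ≤ a ∧ T₀ '' U ⊆ Set.Icc (-a) a)
    (hS₀ob : ∃ a : E, 0 ≤ a ∧ S₀ '' U ⊆ Set.Icc (-a) a)
    (hT : ∀ a : E, 0 ≤ a → ∃ α₀ : ι, ∀ α ≥ α₀, ∀ x ∈ U, |T α x - T₀ x| ≤ a)
    (hS : ∀ a : E, 0 ≤ a → ∃ α₀ : ι, ∀ α ≥ α₀, ∀ x ∈ U, |S α x - S₀ x| ≤ a) :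
    ∀ a : E, 0 ≤ a → ∃ α₀ : ι, ∀ α ≥ α₀, ∀ x ∈ U, 0 ≤ x →
      |RKsup (T α) (S α) x - RKsup T₀ S₀ x| ≤ a := by
  intro a ha
  have hhalf : (0 : E) ≤ (1 / 2 : ℝ) • a := smul_nonneg (by norm_num) ha
  obtain ⟨αT, hαT⟩ := hT _ hhalf
  obtain ⟨αS, hαS⟩ := hS _ hhalf
  refine ⟨αT ⊔ αS, fun α hα x hxU hx => ?_⟩
  have hIcc : Icc 0 x ⊆ U := IsSolid.Icc_zero_subset (fun _ hy _ h => hUsolid _ _ hy h) hxU hx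
  have hbdd : ∀ R : E →ₗ[ℝ] E, (∃ b : E, 0 ≤ b ∧ R '' U ⊆ Icc (-b) b) →
      BddAbove (R '' Icc 0 x) := fun R ⟨_, _, hb⟩ =>
    (bddAbove_Icc.mono hb).mono (image_mono hIcc)
  calc |RKsup (T α) (S α) x - RKsup T₀ S₀ x|
      ≤ (1 / 2 : ℝ) • a + (1 / 2 : ℝ) • a :=
        abs_RKsup_sub_RKsup_le hx (hbdd _ (hTob α)) (hbdd _ (hSob α)) (hbdd _ hT₀ob)
          (hbdd _ hS₀ob) (fun u hu => hαT α (le_sup_left.trans hα) u (hIcc hu))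
          (fun v hv => hαS α (le_sup_right.trans hα) v (hIcc hv))
    _ = a := by rw [← add_smul]; norm_num

/-- In a Dedekind complete locally solid vector lattice `E`, if `U` is a solid
neighborhood of `0` and `(T α) → T₀`, `(S α) → S₀` order-uniformly on `U`, with all operators
mapping `U` into order bounded sets, then the Riesz–Kantorovich suprema `F(T α, S α)` converge
to `F(T₀, S₀)` order-uniformly on `U ∩ E₊`. -/
theorem rksup_orderUnifConv
    {E : Type*} [ConditionallyCompleteLattice E] [AddCommGroup E] [Module ℝ E]
    [CovariantClass E E (· + ·) (· ≤ ·)] [PosSMulMono ℝ E]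
    [TopologicalSpace E] [IsTopologicalAddGroup E] [ContinuousSMul ℝ E]
    (hsolid : ∀ W ∈ 𝓝 (0 : E), ∃ W' ∈ 𝓝 (0 : E), W' ⊆ W ∧
      ∀ x y : E, y ∈ W' → |x| ≤ |y| → x ∈ W')
    {ι : Type*} [Nonempty ι] [SemilatticeSup ι]
    (U : Set E) (hU : U ∈ 𝓝 (0 : E))
    (hUsolid : ∀ x y : E, y ∈ U → |x| ≤ |y| → x ∈ U)
    (T S : ι → E →ₗ[ℝ] E) (T₀ S₀ : E →ₗ[ℝ] E)
    (hTob : ∀ α : ι, ∃ a : E, 0 ≤ a ∧ (T α) '' U ⊆ Set.Icc (-a) a)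
    (hSob : ∀ α : ι, ∃ a : E, 0 ≤ a ∧ (S α) '' U ⊆ Set.Icc (-a) a)
    (hT₀ob : ∃ a : E, 0 ≤ a ∧ T₀ '' U ⊆ Set.Icc (-a) a)
    (hS₀ob : ∃ a : E, 0 ≤ a ∧ S₀ '' U ⊆ Set.Icc (-a) a)
    (hT : ∀ a : E, 0 ≤ a → ∃ α₀ : ι, ∀ α ≥ α₀, ∀ x ∈ U, |T α x - T₀ x| ≤ a)
    (hS : ∀ a : E, 0 ≤ a → ∃ α₀ : ι, ∀ α ≥ α₀, ∀ x ∈ U, |S α x - S₀ x| ≤ a) :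
    ∀ a : E, 0 ≤ a → ∃ α₀ : ι, ∀ α ≥ α₀, ∀ x ∈ U, 0 ≤ x →
      |RKsup (T α) (S α) x - RKsup T₀ S₀ x| ≤ a :=
  rksup_orderUnifConv_general U hUsolid T S T₀ S₀ hTob hSob hT₀ob hS₀ob hT hS
end

section
/- The closed unit ball of c₀ is not order bounded in c₀: there is no function g : ℕ → ℝ with g(i) → 0 as i → ∞ such that |f(i)| ≤ g(i) for every i ∈ ℕ and every f : ℕ → ℝ satisfying f(i) → 0 and |f(i)| ≤ 1 for all i. Consequently, the identity operator on c₀, although order bounded, is not bo-bounded. -/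
open Filter Topology

lemma key_not : ¬ ∃ g : ℕ → ℝ, Filter.Tendsto g Filter.atTop (𝓝 (0 : ℝ)) ∧
      ∀ f : ℕ → ℝ, Filter.Tendsto f Filter.atTop (𝓝 (0 : ℝ)) →
        (∀ i, |f i| ≤ 1) → ∀ i, |f i| ≤ g i := by
  rintro ⟨g, hg, hdom⟩
  have h1 : ∀ i, (1 : ℝ) ≤ g i := by
    intro i
    have hf : Filter.Tendsto (fun j => if j = i then (1 : ℝ) else 0) Filter.atTop (𝓝 0) := by
      apply Filter.Tendsto.congr' _ tendsto_const_nhds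
      filter_upwards [Filter.eventually_gt_atTop i] with j hj
      simp [Nat.ne_of_gt hj]
    have := hdom _ hf (by intro j; by_cases hji : j = i <;> simp [hji]) i
    simpa using this
  have := hg.eventually (eventually_lt_nhds (by norm_num : (0:ℝ) < 1))
  rcases this.exists with ⟨i, hi⟩
  linarith [h1 i]

/-- The closed unit ball of `c₀` is not order bounded in `c₀`: no null real
sequence `g` dominates `|f|` pointwise for every null sequence `f` with `|f i| ≤ 1` for all `i`.
Consequently the identity operator on `c₀`, although order bounded (it maps each order interval
of `c₀` into an order bounded set), is not bo-bounded (it fails to map every norm-bounded subset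
of `c₀` to an order bounded set). -/
theorem unitBall_not_orderBounded_and_id_not_boBounded :
    (¬ ∃ g : ℕ → ℝ, Filter.Tendsto g Filter.atTop (𝓝 (0 : ℝ)) ∧
      ∀ f : ℕ → ℝ, Filter.Tendsto f Filter.atTop (𝓝 (0 : ℝ)) →
        (∀ i, |f i| ≤ 1) → ∀ i, |f i| ≤ g i) ∧
    (∀ h : ℕ → ℝ, Filter.Tendsto h Filter.atTop (𝓝 (0 : ℝ)) →
      ∃ g : ℕ → ℝ, Filter.Tendsto g Filter.atTop (𝓝 (0 : ℝ)) ∧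
        ∀ f : ℕ → ℝ, Filter.Tendsto f Filter.atTop (𝓝 (0 : ℝ)) →
          (∀ i, |f i| ≤ |h i|) → ∀ i, |f i| ≤ g i) ∧
    ¬ (∀ B : Set (ℕ → ℝ), (∀ f ∈ B, Filter.Tendsto f Filter.atTop (𝓝 (0 : ℝ))) →
        (∃ M : ℝ, ∀ f ∈ B, ∀ i, |f i| ≤ M) →
        ∃ g : ℕ → ℝ, Filter.Tendsto g Filter.atTop (𝓝 (0 : ℝ)) ∧
          ∀ f ∈ B, ∀ i, |f i| ≤ g i) := by
  refine ⟨key_not, ?_, ?_⟩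
  · intro h hh
    refine ⟨fun i => |h i|, by simpa using hh.abs, fun f _ hf i => hf i⟩
  · intro H
    apply key_not
    obtain ⟨g, hg, hdom⟩ := H {f | Filter.Tendsto f Filter.atTop (𝓝 (0:ℝ)) ∧ ∀ i, |f i| ≤ 1}
      (fun f hf => hf.1) ⟨1, fun f hf => hf.2⟩
    exact ⟨g, hg, fun f h1 h2 => hdom f ⟨h1, h2⟩⟩
end
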